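/- arXiv:2602.09863 — 2 statements merged into one kernel-verified Lean document; each statement's English description precedes it below -/
import Mathlib

section
/- Let r > 0 be an integer and let M be an r-mountain in a tournament T. Then for all integers a, b > 0 with a + b = r + 1 and every 2-colouring φ : V(M) → {red, blue}, either the subtournament of M induced on the red vertices contains an a-mountain, or the subtournament of M induced on the blue vertices contains a b-mountain. -/
/-- A tournament on a vertex type `V`: an orientation of the complete graph. -/
structure Tournament (V : Type) where
  arc : V → V → Prop
  loopless : ∀ v, ¬ arc v v
  anti : ∀ u v, u ≠ v → (arc u v ↔ ¬ arc v u)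

namespace Tournament

variable {V W : Type}

/-- The backedge graph of `T` with respect to the total ordering of `V` induced by
an injective map `f : V → ℕ`: `u` and `v` are adjacent iff the arc between them
goes backwards in the ordering. -/
def backedge (T : Tournament V) (f : V → ℕ) : SimpleGraph V where
  Adj u v := (f u < f v ∧ T.arc v u) ∨ (f v < f u ∧ T.arc u v)
  symm := ⟨fun u v h => h.symm⟩
  loopless := by
    constructor
    intro v h
    rcases h with ⟨h, _⟩ | ⟨h, _⟩ <;> exact lt_irrefl _ h

/-- The clique number of a tournament: the minimum over all orderings of the
clique number of the corresponding backedge graph. -/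
noncomputable def cliqueNum (T : Tournament V) : ℕ :=
  sInf {n | ∃ f : V → ℕ, Function.Injective f ∧ (T.backedge f).cliqueNum = n}

/-- The subtournament induced on a set `X` of vertices. -/
def restrict (T : Tournament V) (X : Set V) : Tournament X where
  arc u v := T.arc u.1 v.1
  loopless v := T.loopless v.1
  anti u v h := T.anti u.1 v.1 (fun e => h (Subtype.ext e))

/-- `ω⃗(X)`: the clique number of the subtournament induced on `X`. -/
noncomputable def cliqueNumOn (T : Tournament V) (X : Set V) : ℕ :=
  (T.restrict X).cliqueNum

/-- Out-neighbourhood. -/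
def outN (T : Tournament V) (v : V) : Set V := {w | T.arc v w}

/-- In-neighbourhood. -/
def inN (T : Tournament V) (v : V) : Set V := {w | T.arc w v}

/-- `T.HasCopy H`: some set of vertices of `T` induces a subtournament isomorphic to `H`. -/
def HasCopy (T : Tournament V) (H : Tournament W) : Prop :=
  ∃ f : W → V, Function.Injective f ∧ ∀ u v : W, H.arc u v ↔ T.arc (f u) (f v)

end Tournament

/-- Vertex type of the tournament `D n` (`D 0` is empty, `D 1` a single vertex). -/
def DType : ℕ → Type
  | 0 => Empty
  | n+1 => (DType n) ⊕ ((DType n) ⊕ Unit)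

/-- Arcs of `D n`: `D (n+1) = Δ(X, Y, v)` with `X ⇒ Y`, `Y ⇒ v`, `v ⇒ X`,
where `X`, `Y` are copies of `D n` and `v` one extra vertex. -/
def Darc : (n : ℕ) → DType n → DType n → Prop
  | 0, x, _ => x.elim
  | n+1, Sum.inl a, Sum.inl b => Darc n a b
  | _+1, Sum.inl _, Sum.inr (Sum.inl _) => True
  | _+1, Sum.inl _, Sum.inr (Sum.inr _) => False
  | _+1, Sum.inr (Sum.inl _), Sum.inl _ => False
  | n+1, Sum.inr (Sum.inl a), Sum.inr (Sum.inl b) => Darc n a b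
  | _+1, Sum.inr (Sum.inl _), Sum.inr (Sum.inr _) => True
  | _+1, Sum.inr (Sum.inr _), Sum.inl _ => True
  | _+1, Sum.inr (Sum.inr _), Sum.inr _ => False

theorem Darc_irrefl (n : ℕ) : ∀ x : DType n, ¬ Darc n x x := by
  induction n with
  | zero => intro x; exact x.elim
  | succ n ih =>
    intro x
    match x with
    | Sum.inl a => simpa [Darc] using ih a
    | Sum.inr (Sum.inl a) => simpa [Darc] using ih a
    | Sum.inr (Sum.inr u) => simp [Darc]

theorem Darc_anti (n : ℕ) : ∀ x y : DType n, x ≠ y → (Darc n x y ↔ ¬ Darc n y x) := by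
  induction n with
  | zero => intro x; exact x.elim
  | succ n ih =>
    intro x y hxy
    match x, y with
    | Sum.inl a, Sum.inl b =>
      have hab : a ≠ b := by intro h; exact hxy (by rw [h])
      simpa [Darc] using ih a b hab
    | Sum.inl a, Sum.inr (Sum.inl b) => simp [Darc]
    | Sum.inl a, Sum.inr (Sum.inr u) => simp [Darc]
    | Sum.inr (Sum.inl a), Sum.inl b => simp [Darc]
    | Sum.inr (Sum.inl a), Sum.inr (Sum.inl b) =>
      have hab : a ≠ b := by intro h; exact hxy (by rw [h])
      simpa [Darc] using ih a b hab
    | Sum.inr (Sum.inl a), Sum.inr (Sum.inr u) => simp [Darc]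
    | Sum.inr (Sum.inr u), Sum.inl b => simp [Darc]
    | Sum.inr (Sum.inr u), Sum.inr (Sum.inl b) => simp [Darc]
    | Sum.inr (Sum.inr u), Sum.inr (Sum.inr w) =>
      exact absurd (by cases u; cases w; rfl) hxy

/-- The tournament `D n` (indexed so that `D 1` is a single vertex, and
`D (n+1)` is `Δ(D n, D n, v)`). -/
def Dtour (n : ℕ) : Tournament (DType n) where
  arc := Darc n
  loopless := Darc_irrefl n
  anti := Darc_anti n

/-- Vertex type of the tournament `A n` (`A 0` is empty, `A 1` a single vertex):
`A (n+1)` consists of `n` copies of `A n` together with `n+1` extra vertices. -/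
def AType : ℕ → Type
  | 0 => Empty
  | n+1 => (Fin n × AType n) ⊕ Fin (n+1)

/-- Arcs of `A (n+1)` (0-indexed version of the definition of Kim and Kim):
`inl (i, a)` is the vertex `a` of the copy `T_i` of `A n`, and `inr i` is the
extra vertex `v_i`.  We have `v_j ⇒ v_i` for `i < j`; `T_i ⇒ T_j` for `i < j`;
`v_i ⇒ T_j` for `i ≤ j`; and `T_j ⇒ v_i` for `j < i`. -/
def Aarc : (n : ℕ) → AType n → AType n → Prop
  | 0, x, _ => x.elim
  | n+1, Sum.inl (i, a), Sum.inl (j, b) => (i : ℕ) < (j : ℕ) ∨ (i = j ∧ Aarc n a b)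
  | _+1, Sum.inl (j, _), Sum.inr i => (j : ℕ) < (i : ℕ)
  | _+1, Sum.inr i, Sum.inl (j, _) => (i : ℕ) ≤ (j : ℕ)
  | _+1, Sum.inr i, Sum.inr j => (j : ℕ) < (i : ℕ)

theorem Aarc_irrefl (n : ℕ) : ∀ x : AType n, ¬ Aarc n x x := by
  induction n with
  | zero => intro x; exact x.elim
  | succ n ih =>
    intro x
    match x with
    | Sum.inl (i, a) =>
      simp only [Aarc, lt_irrefl, false_or, not_and]
      intro _
      exact ih a
    | Sum.inr i => simp [Aarc]

theorem Aarc_anti (n : ℕ) : ∀ x y : AType n, x ≠ y → (Aarc n x y ↔ ¬ Aarc n y x) := by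
  induction n with
  | zero => intro x; exact x.elim
  | succ n ih =>
    intro x y hxy
    match x, y with
    | Sum.inl (i, a), Sum.inl (j, b) =>
      rcases lt_trichotomy (i : ℕ) (j : ℕ) with h | h | h
      · have hne : j ≠ i := by intro e; rw [e] at h; exact lt_irrefl _ h
        simp only [Aarc]
        constructor
        · intro _ hc
          rcases hc with hc | ⟨hc, _⟩
          · omega
          · exact hne hc
        · intro _; exact Or.inl h
      · have hij : i = j := Fin.ext h
        subst hij
        have hab : a ≠ b := by
          intro e; exact hxy (by rw [e])
        simpa [Aarc] using ih a b hab
      · have hne : i ≠ j := by intro e; rw [e] at h; exact lt_irrefl _ h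
        simp only [Aarc]
        constructor
        · intro hc _
          rcases hc with hc | ⟨hc, _⟩
          · omega
          · exact hne hc
        · intro hc
          exfalso
          exact hc (Or.inl h)
    | Sum.inl (j, a), Sum.inr i => simp only [Aarc]; omega
    | Sum.inr i, Sum.inl (j, a) => simp only [Aarc]; omega
    | Sum.inr i, Sum.inr j =>
      have hne : (i : ℕ) ≠ (j : ℕ) := fun e => hxy (by rw [Fin.ext e])
      simp only [Aarc]
      omega

/-- The tournament `A n` of Kim and Kim (indexed so that `A 1` is a single vertex). -/
def Atour (n : ℕ) : Tournament (AType n) where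
  arc := Aarc n
  loopless := Aarc_irrefl n
  anti := Aarc_anti n
namespace Tournament

variable {V : Type}

/-- `M` contains a set `K` of `s` vertices such that every arc of `T[K]` is heavy,
as witnessed by a mountain (in the sense of the predicate `mtn`) inside `M`. -/
def HasHeavyClique (T : Tournament V) (mtn : Set V → Prop) (s : ℕ) (M : Set V) : Prop :=
  ∃ K ⊆ M, K.ncard = s ∧ ∀ u ∈ K, ∀ v ∈ K, T.arc u v →
    ∃ M' ⊆ M, mtn M' ∧ (∀ m ∈ M', T.arc m u) ∧ (∀ m ∈ M', T.arc v m)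

/-- `M` is minimal subject to containing an `(r,s)`-clique (heaviness being
witnessed by `r`-mountains, given by the predicate `mtn`, inside `M`). -/
def IsRSMtnAux (T : Tournament V) (mtn : Set V → Prop) (s : ℕ) (M : Set V) : Prop :=
  T.HasHeavyClique mtn s M ∧ ∀ M' ⊆ M, T.HasHeavyClique mtn s M' → M' = M

/-- `T.IsMtn r M`: the set `M` induces an `r`-mountain.  A `1`-mountain is a single
vertex, and an `(r+1)`-mountain (for `r ≥ 1`) is an `(r, r+1)`-mountain, i.e. a minimal
set containing `r+1` vertices all of whose arcs are `r`-heavy within the set. -/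
def IsMtn (T : Tournament V) : ℕ → Set V → Prop
  | 0 => fun _ => False
  | 1 => fun M => ∃ v, M = {v}
  | (r+2) => T.IsRSMtnAux (T.IsMtn (r+1)) (r+2)

/-- `T.IsRSMtn r s M`: the set `M` induces an `(r,s)`-mountain, i.e. a minimal set
containing an `(r,s)`-clique (with heaviness witnessed by `r`-mountains inside the set). -/
def IsRSMtn (T : Tournament V) (r s : ℕ) (M : Set V) : Prop :=
  T.IsRSMtnAux (T.IsMtn r) s M

/-- A `(c,a)`-ω⃗-bag-chain: pairwise disjoint bags of clique number exactly `c`,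
with all "wrong direction" neighbourhoods between bags of clique number less than `a`. -/
def IsBagChain (T : Tournament V) (c a : ℕ) {t : ℕ} (B : Fin t → Set V) : Prop :=
  (∀ i j : Fin t, i ≠ j → Disjoint (B i) (B j)) ∧
  (∀ i, T.cliqueNumOn (B i) = c) ∧
  (∀ i j : Fin t, i < j →
    (∀ v ∈ B j, T.cliqueNumOn (T.outN v ∩ B i) < a) ∧
    (∀ w ∈ B i, T.cliqueNumOn (T.inN w ∩ B j) < a))

/-- A `(c,a)`-near-bag-chain: pairwise disjoint bags of clique number at most `c`,
such that for every vertex the "wrong direction" neighbours in the union of the other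
bags have clique number at most `a`. -/
def IsNearBagChain (T : Tournament V) (c a : ℕ) {t : ℕ} (Q : Fin t → Set V) : Prop :=
  (∀ i j : Fin t, i ≠ j → Disjoint (Q i) (Q j)) ∧
  (∀ i, T.cliqueNumOn (Q i) ≤ c) ∧
  (∀ i : Fin t, ∀ v ∈ Q i,
    T.cliqueNumOn (T.inN v ∩ ⋃ j, ⋃ (_ : i < j), Q j) ≤ a ∧
    T.cliqueNumOn (T.outN v ∩ ⋃ j, ⋃ (_ : j < i), Q j) ≤ a)

end Tournament

/-- The Ramsey number `R(x,y)`: the least `N` such that every graph on `N` vertices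
contains a clique of size `x` or an independent set of size `y` (equivalently, every
red/blue colouring of the edges of `K_N` contains a red `K_x` or a blue `K_y`). -/
noncomputable def ramseyNumber (x y : ℕ) : ℕ :=
  sInf {N | ∀ G : SimpleGraph (Fin N),
    (∃ s, G.IsNClique x s) ∨ (∃ s, Gᶜ.IsNClique y s)}

/-!
Induct on `r`. Of the `r + 1` vertices of the heavy clique `K` of an `(r + 1)`-mountain `M`,
at least `a` are red or at least `b` are blue; say the former. Unless the blue part of `M`
already holds a `b`-mountain, the induction hypothesis applied to the `r`-mountain certifying an
arc of `K` yields a red `(a - 1)`-mountain certifying the same arc. So `a` red vertices of `K`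
form an `(a - 1, a)`-clique inside the red part of `M`, and a minimal set containing it is a
red `a`-mountain.
-/

theorem Set.le_ncard_inter_or_le_ncard_inter {α : Type*} {K R B : Set α} (hK : K ⊆ R ∪ B)
    {a b : ℕ} (hab : a + b = K.ncard + 1) : a ≤ (K ∩ R).ncard ∨ b ≤ (K ∩ B).ncard := by
  have hsplit : K = K ∩ R ∪ K ∩ B := by
    rw [← Set.inter_union_distrib_left, Set.inter_eq_left.2 hK]
  have := Set.ncard_union_le (K ∩ R) (K ∩ B)
  rw [← hsplit] at this
  omega

namespace Tournament

variable {V : Type} (T : Tournament V)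

def ArcsHeavy (mtn : Set V → Prop) (M K : Set V) : Prop :=
  ∀ u ∈ K, ∀ v ∈ K, T.arc u v →
    ∃ M' ⊆ M, mtn M' ∧ (∀ m ∈ M', T.arc m u) ∧ (∀ m ∈ M', T.arc v m)

def HasColouredMtn (a b : ℕ) (M R B : Set V) : Prop :=
  (∃ N ⊆ M ∩ R, T.IsMtn a N) ∨ ∃ N ⊆ M ∩ B, T.IsMtn b N

variable {T}

theorem ArcsHeavy.anti {mtn : Set V → Prop} {M K K' : Set V} (h : T.ArcsHeavy mtn M K)
    (hK' : K' ⊆ K) : T.ArcsHeavy mtn M K' :=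
  fun u hu v hv huv => h u (hK' hu) v (hK' hv) huv

theorem ArcsHeavy.inter {mtn mtn' : Set V → Prop} {M K R : Set V} (h : T.ArcsHeavy mtn M K)
    (hmtn : ∀ M' ⊆ M, mtn M' → ∃ N ⊆ M' ∩ R, mtn' N) :
    T.ArcsHeavy mtn' (M ∩ R) K := by
  intro u hu v hv huv
  obtain ⟨M', hM'M, hM', hM'u, hvM'⟩ := h u hu v hv huv
  obtain ⟨N, hNM', hN⟩ := hmtn M' hM'M hM'
  exact ⟨N, hNM'.trans (Set.inter_subset_inter_left R hM'M), hN,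
    fun m hm => hM'u m (hNM' hm).1, fun m hm => hvM' m (hNM' hm).1⟩

theorem exists_isRSMtnAux_subset [Finite V] {mtn : Set V → Prop} {s : ℕ} {S : Set V}
    (h : T.HasHeavyClique mtn s S) : ∃ M ⊆ S, T.IsRSMtnAux mtn s M := by
  obtain ⟨M, hMS, hmin⟩ :=
    (Set.toFinite {M | T.HasHeavyClique mtn s M}).exists_le_minimal h
  exact ⟨M, hMS, hmin.prop, fun M' hM'M hM' => hmin.eq_of_subset hM' hM'M⟩

theorem exists_isMtn_subset_inter [Finite V] {k : ℕ} {mtn : Set V → Prop} {M K R : Set V}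
    (hKM : K ⊆ M) (hK : T.ArcsHeavy mtn M K) (hKR : k + 2 ≤ (K ∩ R).ncard)
    (hmtn : ∀ M' ⊆ M, mtn M' → ∃ N ⊆ M' ∩ R, T.IsMtn (k + 1) N) :
    ∃ N ⊆ M ∩ R, T.IsMtn (k + 2) N := by
  obtain ⟨K', hK'KR, hK'⟩ := Set.exists_subset_card_eq hKR
  exact exists_isRSMtnAux_subset
    ⟨K', hK'KR.trans (Set.inter_subset_inter_left R hKM), hK',
      (hK.inter hmtn).anti (hK'KR.trans Set.inter_subset_left)⟩

theorem hasColouredMtn_of_le_ncard_inter [Finite V] {n a b : ℕ} {M K R B : Set V}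
    (ih : ∀ M' ⊆ M, T.IsMtn (n + 1) M' →
      ∀ a' : ℕ, 0 < a' → a' + b = n + 2 → T.HasColouredMtn a' b M' R B)
    (hKM : K ⊆ M) (hK : T.ArcsHeavy (T.IsMtn (n + 1)) M K) (ha : 0 < a)
    (hab : a + b = n + 3) (haK : a ≤ (K ∩ R).ncard) : T.HasColouredMtn a b M R B := by
  rcases Nat.lt_or_ge a 2 with ha2 | ha2
  · obtain rfl : a = 1 := by omega
    obtain ⟨v, hvK, hvR⟩ := Set.nonempty_of_ncard_ne_zero (by omega : (K ∩ R).ncard ≠ 0)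
    exact Or.inl ⟨{v}, Set.singleton_subset_iff.2 ⟨hKM hvK, hvR⟩, v, rfl⟩
  obtain ⟨k, rfl⟩ := Nat.exists_eq_add_of_le' ha2
  by_cases hB : ∃ N ⊆ M ∩ B, T.IsMtn b N
  · exact Or.inr hB
  refine Or.inl (exists_isMtn_subset_inter hKM hK haK fun M' hM'M hM' => ?_)
  refine (ih M' hM'M hM' _ k.succ_pos (by omega)).resolve_right ?_
  rintro ⟨N, hN, hNmtn⟩
  exact hB ⟨N, hN.trans (Set.inter_subset_inter_left B hM'M), hNmtn⟩

theorem IsMtn.hasColouredMtn [Finite V] : ∀ {r : ℕ} {M : Set V}, T.IsMtn r M →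
    ∀ {R B : Set V}, M ⊆ R ∪ B → ∀ {a b : ℕ}, 0 < a → 0 < b → a + b = r + 1 →
      T.HasColouredMtn a b M R B
  | 1, _, ⟨v, rfl⟩, R, B, hRB, a, b, ha, hb, hab => by
    obtain ⟨rfl, rfl⟩ : a = 1 ∧ b = 1 := by omega
    rcases Set.singleton_subset_iff.1 hRB with hv | hv
    · exact Or.inl ⟨{v}, Set.singleton_subset_iff.2 ⟨rfl, hv⟩, v, rfl⟩
    · exact Or.inr ⟨{v}, Set.singleton_subset_iff.2 ⟨rfl, hv⟩, v, rfl⟩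
  | n + 2, M, ⟨⟨K, hKM, hKcard, hK⟩, _⟩, R, B, hRB, a, b, ha, hb, hab => by
    have ih {M' : Set V} (hM'M : M' ⊆ M) (hM' : T.IsMtn (n + 1) M') {a b : ℕ}
        (ha : 0 < a) (hb : 0 < b) (hab : a + b = n + 2) :
        T.HasColouredMtn a b M' R B :=
      hM'.hasColouredMtn (hM'M.trans hRB) ha hb hab
    rcases Set.le_ncard_inter_or_le_ncard_inter (hKM.trans hRB) (hKcard ▸ hab) with haK | hbK
    · exact hasColouredMtn_of_le_ncard_inter
        (fun M' hM'M hM' _ ha' hab' => ih hM'M hM' ha' hb hab') hKM hK ha hab haK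
    · exact Or.symm <| hasColouredMtn_of_le_ncard_inter
        (fun M' hM'M hM' _ hb' hab' => Or.symm <| ih hM'M hM' ha hb' (by omega))
        hKM hK hb (by omega) hbK

end Tournament

open Tournament in
theorem stmt_7_general {V : Type} [Fintype V] (T : Tournament V) (r : ℕ)
    (M : Set V) (hM : T.IsMtn r M) (a b : ℕ) (ha : 0 < a) (hb : 0 < b)
    (hab : a + b = r + 1) (φ : V → Bool) :
    (∃ M' ⊆ {v ∈ M | φ v = true}, T.IsMtn a M') ∨
      (∃ M' ⊆ {v ∈ M | φ v = false}, T.IsMtn b M') :=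
  hM.hasColouredMtn (R := {v | φ v = true}) (B := {v | φ v = false})
    (fun v _ => by cases φ v <;> simp) ha hb hab

open Tournament in
/-- Lemma (2-colouring mountains): if `M` is an `r`-mountain in a tournament `T`,
`a + b = r + 1` with `a, b > 0`, and `φ` is a 2-colouring of the vertices of `M`,
then the red vertices of `M` contain an `a`-mountain or the blue vertices of `M`
contain a `b`-mountain. -/
theorem stmt_7 {V : Type} [Fintype V] (T : Tournament V) (r : ℕ) (hr : 0 < r)
    (M : Set V) (hM : T.IsMtn r M) (a b : ℕ) (ha : 0 < a) (hb : 0 < b)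
    (hab : a + b = r + 1) (φ : V → Bool) :
    (∃ M' ⊆ {v ∈ M | φ v = true}, T.IsMtn a M') ∨
      (∃ M' ⊆ {v ∈ M | φ v = false}, T.IsMtn b M') :=
  stmt_7_general T r M hM a b ha hb hab φ
end

section
/- Let n ≥ 2 and let c_small ≥ 0 and c_large ≥ 2^n · c_small be integers. Let T be a tournament that is D_n-free and such that every subtournament T' of T with ω⃗(T') ≥ c_small contains a copy of D_{n−1}, and let (B_1, …, B_t) be a (c_large, c_small)-ω⃗-bag-chain in T. Then for every i ∈ {1, …, t} and every v ∈ B_i: (a) ω⃗(N^−(v) ∩ ⋃_{k>i} B_k) < 2·c_small, and (b) ω⃗(N^+(v) ∩ ⋃_{k<i} B_k) < 2·c_small. -/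
/-! Suppose `ω⃗(N⁻(v) ∩ ⋃_{k>i} B_k) ≥ 2c` for `v ∈ B_i`. The first later bag `B_k` contributes
less than `c`, so the in-neighbours `H` of `v` beyond `B_k` have `ω⃗(H) ≥ c` and contain a copy
`Y` of `D_{n-1}`. Each vertex of `Y` has out-neighbourhood of clique number `< c` in `B_k`, as
has the in-neighbourhood of `v`; since `ω⃗(B_k) ≥ 2ⁿc`, the out-neighbours of `v` in `B_k` that
are out-neighbours of no vertex of `Y` still have clique number `≥ c`, hence contain a copy `X`
of `D_{n-1}`. Now `X ⇒ Y ⇒ v ⇒ X` is a copy of `D_n`. The bound on out-neighbours in earlier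
bags is the same statement for the reversed tournament and the reversed chain, as reversal
preserves `ω⃗` and `D_n` is isomorphic to its reverse. -/

namespace SimpleGraph

variable {α β : Type*} {G : SimpleGraph α} {H : SimpleGraph β}

theorem cliqueNum_le_of_hom [Finite β] (φ : G →g H) : G.cliqueNum ≤ H.cliqueNum := by
  classical
  obtain ⟨s, hs⟩ := G.exists_isNClique_cliqueNum
  have hinj : Set.InjOn φ s := fun x hx y hy hxy => by
    by_contra hne
    exact (φ.map_adj (hs.isClique hx hy hne)).ne hxy
  have hclique : H.IsClique (s.image φ : Set β) := by
    rw [Finset.coe_image]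
    rintro _ ⟨x, hx, rfl⟩ _ ⟨y, hy, rfl⟩ hne
    exact φ.map_adj (hs.isClique hx hy fun h => hne (h ▸ rfl))
  calc G.cliqueNum = (s.image φ).card := by rw [Finset.card_image_of_injOn hinj, hs.card_eq]
    _ ≤ H.cliqueNum := hclique.card_le_cliqueNum

theorem cliqueNum_le_induce_add_induce_compl [Finite α] (G : SimpleGraph α) (s : Set α) :
    G.cliqueNum ≤ (G.induce s).cliqueNum + (G.induce sᶜ).cliqueNum := by
  classical
  obtain ⟨t, ht⟩ := G.exists_isNClique_cliqueNum
  have hpart : ∀ (p : Set α) [DecidablePred (· ∈ p)],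
      (t.filter (· ∈ p)).card ≤ (G.induce p).cliqueNum := fun p _ => by
    rw [← Finset.card_subtype]
    refine IsClique.card_le_cliqueNum (tc := fun x hx y hy hne => ?_)
    exact ht.isClique (by simpa using hx) (by simpa using hy) (Subtype.coe_injective.ne hne)
  calc G.cliqueNum = (t.filter (· ∈ s)).card + (t.filter (· ∈ sᶜ)).card := by
        rw [← ht.card_eq]
        exact (Finset.card_filter_add_card_filter_not _).symm
    _ ≤ _ := add_le_add (hpart s) (hpart sᶜ)

end SimpleGraph

namespace Tournament

variable {V : Type} (T : Tournament V)

def reverse : Tournament V where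
  arc u v := T.arc v u
  loopless := T.loopless
  anti u v h := T.anti v u h.symm

theorem arc_asymm {u v : V} (h : T.arc u v) : ¬ T.arc v u :=
  (T.anti u v fun e => T.loopless u (e ▸ h)).mp h

theorem cliqueNum_le_backedge {f : V → ℕ} (hf : Function.Injective f) :
    T.cliqueNum ≤ (T.backedge f).cliqueNum :=
  Nat.sInf_le ⟨f, hf, rfl⟩

theorem exists_backedge_cliqueNum_eq [Finite V] :
    ∃ f : V → ℕ, Function.Injective f ∧ (T.backedge f).cliqueNum = T.cliqueNum := by
  obtain ⟨e⟩ := nonempty_embedding_nat V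
  exact Nat.sInf_mem
    (s := {n | ∃ f : V → ℕ, Function.Injective f ∧ (T.backedge f).cliqueNum = n})
    ⟨_, e, e.injective, rfl⟩

theorem cliqueNumOn_empty : T.cliqueNumOn ∅ = 0 := by
  refine Nat.eq_zero_of_le_zero ((T.restrict ∅).cliqueNum_le_backedge
    (f := fun _ => 0) (fun u _ _ => (Set.notMem_empty _ u.2).elim) |>.trans ?_)
  obtain ⟨s, hs⟩ := ((T.restrict ∅).backedge fun _ => 0).exists_isNClique_cliqueNum
  rw [← hs.card_eq, Finset.eq_empty_of_isEmpty s, Finset.card_empty]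

variable [Finite V]

theorem cliqueNumOn_mono {A B : Set V} (hAB : A ⊆ B) : T.cliqueNumOn A ≤ T.cliqueNumOn B := by
  obtain ⟨f, hf, hfB⟩ := (T.restrict B).exists_backedge_cliqueNum_eq
  calc T.cliqueNumOn A ≤ ((T.restrict A).backedge (f ∘ Set.inclusion hAB)).cliqueNum :=
        cliqueNum_le_backedge _ (hf.comp (Set.inclusion_injective hAB))
    _ ≤ ((T.restrict B).backedge f).cliqueNum :=
        SimpleGraph.cliqueNum_le_of_hom
          (⟨Set.inclusion hAB, id⟩ : _ →g (T.restrict B).backedge f)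
    _ = T.cliqueNumOn B := hfB

theorem cliqueNumOn_union_le (A B : Set V) :
    T.cliqueNumOn (A ∪ B) ≤ T.cliqueNumOn A + T.cliqueNumOn B := by
  classical
  obtain ⟨f, hf, hfA⟩ := (T.restrict A).exists_backedge_cliqueNum_eq
  obtain ⟨g, hg, hgB⟩ := (T.restrict B).exists_backedge_cliqueNum_eq
  -- Only the order within each part matters, so the parts may be interleaved by parity.
  let F : ↥(A ∪ B) → ℕ := fun u =>
    if h : u.1 ∈ A then 2 * f ⟨u, h⟩ else 2 * g ⟨u, u.2.resolve_left h⟩ + 1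
  have hFA : ∀ u (h : u.1 ∈ A), F u = 2 * f ⟨u, h⟩ := fun u h => dif_pos h
  have hFB : ∀ u (h : u.1 ∉ A), F u = 2 * g ⟨u, u.2.resolve_left h⟩ + 1 :=
    fun u h => dif_neg h
  have hF : Function.Injective F := by
    intro u w h
    by_cases hu : u.1 ∈ A <;> by_cases hw : w.1 ∈ A
    · rw [hFA u hu, hFA w hw] at h
      have := hf (show f ⟨u, hu⟩ = f ⟨w, hw⟩ by omega)
      exact Subtype.ext (Subtype.mk.inj this)
    · rw [hFA u hu, hFB w hw] at h; omega
    · rw [hFB u hu, hFA w hw] at h; omega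
    · rw [hFB u hu, hFB w hw] at h
      have := hg (show g ⟨u, u.2.resolve_left hu⟩ = g ⟨w, w.2.resolve_left hw⟩ by omega)
      exact Subtype.ext (Subtype.mk.inj this)
  let G := (T.restrict (A ∪ B)).backedge F
  let φA : G.induce {u | u.1 ∈ A} →g (T.restrict A).backedge f :=
    ⟨fun u => ⟨u.1, u.2⟩, fun {u w} (h : G.Adj u w) => by
      rcases h with ⟨hlt, harc⟩ | ⟨hlt, harc⟩ <;> rw [hFA u u.2, hFA w w.2] at hlt
      exacts [Or.inl ⟨by omega, harc⟩, Or.inr ⟨by omega, harc⟩]⟩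
  let φB : G.induce {u | u.1 ∈ A}ᶜ →g (T.restrict B).backedge g :=
    ⟨fun u => ⟨u.1, u.1.2.resolve_left u.2⟩, fun {u w} (h : G.Adj u w) => by
      rcases h with ⟨hlt, harc⟩ | ⟨hlt, harc⟩ <;> rw [hFB u u.2, hFB w w.2] at hlt
      exacts [Or.inl ⟨by omega, harc⟩, Or.inr ⟨by omega, harc⟩]⟩
  calc T.cliqueNumOn (A ∪ B) ≤ G.cliqueNum := cliqueNum_le_backedge _ hF
    _ ≤ _ := G.cliqueNum_le_induce_add_induce_compl _
    _ ≤ _ := add_le_add (SimpleGraph.cliqueNum_le_of_hom φA)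
        (SimpleGraph.cliqueNum_le_of_hom φB)
    _ = T.cliqueNumOn A + T.cliqueNumOn B := by rw [hfA, hgB]; rfl

theorem cliqueNumOn_biUnion_le {ι : Type*} (s : Finset ι) (g : ι → Set V) :
    T.cliqueNumOn (⋃ i ∈ s, g i) ≤ ∑ i ∈ s, T.cliqueNumOn (g i) := by
  classical
  induction s using Finset.induction_on with
  | empty => simp [cliqueNumOn_empty]
  | insert a s ha ih =>
    rw [Finset.set_biUnion_insert, Finset.sum_insert ha]
    exact (T.cliqueNumOn_union_le _ _).trans (by omega)

theorem cliqueNum_le_cliqueNum_reverse : T.cliqueNum ≤ T.reverse.cliqueNum := by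
  obtain ⟨f, hf, hfT⟩ := T.reverse.exists_backedge_cliqueNum_eq
  obtain ⟨M, hM⟩ := Finite.exists_le f
  have hrev : Function.Injective fun u => M - f u := fun u w h => by
    have := hM u; have := hM w
    exact hf (by simp only at h; omega)
  calc T.cliqueNum ≤ (T.backedge fun u => M - f u).cliqueNum := T.cliqueNum_le_backedge hrev
    _ ≤ (T.reverse.backedge f).cliqueNum :=
        SimpleGraph.cliqueNum_le_of_hom ⟨id, fun {u w} h => by
        have := hM u; have := hM w
        change (f u < f w ∧ T.arc u w) ∨ (f w < f u ∧ T.arc w u)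
        rcases h with ⟨hlt, harc⟩ | ⟨hlt, harc⟩ <;> dsimp only at hlt
        exacts [Or.inr ⟨by omega, harc⟩, Or.inl ⟨by omega, harc⟩]⟩
    _ = T.reverse.cliqueNum := hfT

theorem cliqueNum_reverse : T.reverse.cliqueNum = T.cliqueNum :=
  le_antisymm T.reverse.cliqueNum_le_cliqueNum_reverse T.cliqueNum_le_cliqueNum_reverse

theorem cliqueNumOn_reverse (X : Set V) : T.reverse.cliqueNumOn X = T.cliqueNumOn X :=
  (T.restrict X).cliqueNum_reverse

end Tournament

instance DType.instFintype : (n : ℕ) → Fintype (DType n)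
  | 0 => inferInstanceAs (Fintype Empty)
  | n + 1 => letI := DType.instFintype n; inferInstanceAs (Fintype (DType n ⊕ (DType n ⊕ Unit)))

theorem DType.card_add_one : ∀ n, Fintype.card (DType n) + 1 = 2 ^ n
  | 0 => rfl
  | n + 1 => by
    have ih := DType.card_add_one n
    change Fintype.card (DType n ⊕ (DType n ⊕ Unit)) + 1 = _
    rw [Fintype.card_sum, Fintype.card_sum, Fintype.card_unit, pow_succ]
    omega

def Drev : (n : ℕ) → DType n → DType n
  | 0, x => x
  | _ + 1, Sum.inl a => Sum.inr (Sum.inl (Drev _ a))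
  | _ + 1, Sum.inr (Sum.inl b) => Sum.inl (Drev _ b)
  | _ + 1, Sum.inr (Sum.inr u) => Sum.inr (Sum.inr u)

theorem Darc_Drev : ∀ (n : ℕ) (a b : DType n), Darc n (Drev n a) (Drev n b) ↔ Darc n b a
  | 0, a, _ => a.elim
  | n + 1, a, b => by
    rcases a with a | a | a <;> rcases b with b | b | b <;> simp [Drev, Darc, Darc_Drev n]

namespace Tournament

variable {V W : Type} (T : Tournament V)

theorem hasCopy_of_arc_iff {H : Tournament W} (f : W → V)
    (hf : ∀ u w, H.arc u w ↔ T.arc (f u) (f w)) : T.HasCopy H := by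
  refine ⟨f, fun u w h => ?_, hf⟩
  by_contra hne
  by_cases huw : H.arc u w
  · have := (hf u w).mp huw
    rw [h] at this
    exact T.loopless _ this
  · have := (hf w u).mp ((H.anti w u (Ne.symm hne)).mpr huw)
    rw [h] at this
    exact T.loopless _ this

theorem exists_copy_of_hasCopy_restrict {X : Set V} {H : Tournament W}
    (h : (T.restrict X).HasCopy H) :
    ∃ f : W → V, (∀ w, f w ∈ X) ∧ ∀ u w, H.arc u w ↔ T.arc (f u) (f w) := by
  obtain ⟨f, -, hf⟩ := h
  exact ⟨fun w => f w, fun w => (f w).2, hf⟩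

theorem HasCopy.reverse {n : ℕ} (h : T.HasCopy (Dtour n)) : T.reverse.HasCopy (Dtour n) := by
  obtain ⟨f, -, hf⟩ := h
  exact T.reverse.hasCopy_of_arc_iff (f ∘ Drev n) fun u w => (Darc_Drev n w u).symm.trans (hf _ _)

theorem hasCopy_Dtour_succ {n : ℕ} (X Y : DType n → V) (v : V)
    (hX : ∀ a b, Darc n a b ↔ T.arc (X a) (X b))
    (hY : ∀ a b, Darc n a b ↔ T.arc (Y a) (Y b))
    (hXY : ∀ a b, T.arc (X a) (Y b)) (hYv : ∀ b, T.arc (Y b) v) (hvX : ∀ a, T.arc v (X a)) :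
    T.HasCopy (Dtour (n + 1)) := by
  have hYX : ∀ a b, ¬ T.arc (Y b) (X a) := fun a b => T.arc_asymm (hXY a b)
  have hvY : ∀ b, ¬ T.arc v (Y b) := fun b => T.arc_asymm (hYv b)
  have hXv : ∀ a, ¬ T.arc (X a) v := fun a => T.arc_asymm (hvX a)
  refine T.hasCopy_of_arc_iff (Sum.elim X (Sum.elim Y fun _ => v)) ?_
  rintro (a | b | _) (a' | b' | _) <;> simp only [Dtour, Darc, Sum.elim_inl, Sum.elim_inr] <;>
    first
    | exact hX _ _
    | exact hY _ _
    | simp [hXY, hYv, hvX, hYX, hvY, hXv, T.loopless]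

end Tournament

namespace Tournament

variable {V : Type} {T : Tournament V} [Finite V]

theorem cliqueNumOn_lt_of_apex {n c : ℕ} (hDfree : ¬ T.HasCopy (Dtour (n + 1)))
    (hsub : ∀ X : Set V, c ≤ T.cliqueNumOn X → (T.restrict X).HasCopy (Dtour n))
    {v : V} {A H : Set V} (hvA : v ∉ A) (hAH : Disjoint A H) (hHv : H ⊆ T.inN v)
    (hH : c ≤ T.cliqueNumOn H) (hHA : ∀ y ∈ H, T.cliqueNumOn (T.outN y ∩ A) < c)
    (hAv : T.cliqueNumOn (T.inN v ∩ A) < c) :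
    T.cliqueNumOn A < 2 ^ (n + 1) * c := by
  obtain ⟨Y, hYH, hY⟩ := T.exists_copy_of_hasCopy_restrict (hsub H hH)
  set U := ⋃ b ∈ (Finset.univ : Finset (DType n)), T.outN (Y b) ∩ A
  have hU : T.cliqueNumOn U ≤ Fintype.card (DType n) * c :=
    calc T.cliqueNumOn U ≤ ∑ b, T.cliqueNumOn (T.outN (Y b) ∩ A) :=
          T.cliqueNumOn_biUnion_le _ _
      _ ≤ ∑ _b : DType n, c := Finset.sum_le_sum fun b _ => (hHA _ (hYH b)).le
      _ = Fintype.card (DType n) * c := by simp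
  have hW : T.cliqueNumOn ((T.outN v ∩ A) \ U) < c := by
    by_contra! hWc
    obtain ⟨X, hXW, hX⟩ := T.exists_copy_of_hasCopy_restrict (hsub _ hWc)
    refine hDfree (T.hasCopy_Dtour_succ X Y v hX hY (fun a b => ?_) (fun b => hHv (hYH b))
      fun a => (hXW a).1.1)
    have hXA : X a ∈ A := (hXW a).1.2
    refine (T.anti _ _ (hAH.ne_of_mem hXA (hYH b))).mpr fun h => (hXW a).2 ?_
    exact Set.mem_iUnion₂.mpr ⟨b, Finset.mem_univ b, h, hXA⟩
  have hcover : A ⊆ (T.outN v ∩ A) \ U ∪ U ∪ (T.inN v ∩ A) := by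
    intro a ha
    by_cases hva : T.arc v a
    · by_cases haU : a ∈ U
      · exact Or.inl (Or.inr haU)
      · exact Or.inl (Or.inl ⟨⟨hva, ha⟩, haU⟩)
    · exact Or.inr ⟨(T.anti a v fun h => hvA (h ▸ ha)).mpr hva, ha⟩
  have hcard := DType.card_add_one n
  calc T.cliqueNumOn A
      ≤ T.cliqueNumOn ((T.outN v ∩ A) \ U) + T.cliqueNumOn U + T.cliqueNumOn (T.inN v ∩ A) :=
        (T.cliqueNumOn_mono hcover).trans <| (T.cliqueNumOn_union_le _ _).trans <|
          add_le_add (T.cliqueNumOn_union_le _ _) le_rfl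
    _ < (Fintype.card (DType n) + 2) * c := by nlinarith
    _ ≤ 2 ^ (n + 1) * c := by rw [pow_succ]; nlinarith

variable {n c clarge t : ℕ} {B : Fin t → Set V}

theorem IsBagChain.cliqueNumOn_inN_later_lt (hB : T.IsBagChain clarge c B)
    (hDfree : ¬ T.HasCopy (Dtour (n + 1)))
    (hsub : ∀ X : Set V, c ≤ T.cliqueNumOn X → (T.restrict X).HasCopy (Dtour n))
    (hc : 0 < c) (hcl : 2 ^ (n + 1) * c ≤ clarge) {i : Fin t} {v : V} (hv : v ∈ B i) :
    T.cliqueNumOn (T.inN v ∩ ⋃ k, ⋃ (_ : i < k), B k) < 2 * c := by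
  obtain ⟨hdisj, hbag, hchain⟩ := hB
  by_contra! hS
  obtain ⟨u, -, hu⟩ : (T.inN v ∩ ⋃ k, ⋃ (_ : i < k), B k).Nonempty :=
    Set.nonempty_iff_ne_empty.mpr fun h => by rw [h, cliqueNumOn_empty] at hS; omega
  obtain ⟨j, hij, -⟩ := Set.mem_iUnion₂.mp hu
  let k : Fin t := ⟨i + 1, by have := j.isLt; rw [Fin.lt_def] at hij; omega⟩
  have hik : i < k := Fin.lt_def.mpr (Nat.lt_succ_self _)
  set H := T.inN v ∩ ⋃ j, ⋃ (_ : k < j), B j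
  have hsplit : T.inN v ∩ ⋃ j, ⋃ (_ : i < j), B j ⊆ (T.inN v ∩ B k) ∪ H := by
    rintro w ⟨hwv, hw⟩
    obtain ⟨j, hij, hwj⟩ := Set.mem_iUnion₂.mp hw
    have hjk : j = k ∨ k < j := by simp only [Fin.lt_def, Fin.ext_iff, k] at hij ⊢; omega
    rcases hjk with rfl | hkj
    · exact Or.inl ⟨hwv, hwj⟩
    · exact Or.inr ⟨hwv, Set.mem_iUnion₂.mpr ⟨j, hkj, hwj⟩⟩
  have hvk := (hchain i k hik).2 v hv
  have hH : c ≤ T.cliqueNumOn H := by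
    have := (T.cliqueNumOn_mono hsplit).trans (T.cliqueNumOn_union_le _ _)
    omega
  have hkH : Disjoint (B k) H := Set.disjoint_left.mpr fun w hwk ⟨_, hw⟩ => by
    obtain ⟨j, hkj, hwj⟩ := Set.mem_iUnion₂.mp hw
    exact Set.disjoint_left.mp (hdisj k j hkj.ne) hwk hwj
  have hHk : ∀ y ∈ H, T.cliqueNumOn (T.outN y ∩ B k) < c := fun y ⟨_, hy⟩ => by
    obtain ⟨j, hkj, hyj⟩ := Set.mem_iUnion₂.mp hy
    exact (hchain k j hkj).1 y hyj
  have := cliqueNumOn_lt_of_apex hDfree hsub (Set.disjoint_left.mp (hdisj i k hik.ne) hv) hkH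
    Set.inter_subset_left hH hHk hvk
  rw [hbag k] at this
  omega

theorem IsBagChain.reverse {a : ℕ} (hB : T.IsBagChain c a B) :
    T.reverse.IsBagChain c a (B ∘ Fin.rev) := by
  obtain ⟨hdisj, hbag, hchain⟩ := hB
  refine ⟨fun i j hij => hdisj _ _ (Fin.rev_injective.ne hij), fun i => ?_, fun i j hij => ?_⟩
  · rw [Function.comp_apply, cliqueNumOn_reverse, hbag]
  · obtain ⟨hout, hin⟩ := hchain j.rev i.rev (Fin.rev_lt_rev.mpr hij)
    exact ⟨fun w hw => (T.cliqueNumOn_reverse _).trans_lt (hin w hw),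
      fun w hw => (T.cliqueNumOn_reverse _).trans_lt (hout w hw)⟩

theorem IsBagChain.cliqueNumOn_outN_earlier_lt (hB : T.IsBagChain clarge c B)
    (hDfree : ¬ T.HasCopy (Dtour (n + 1)))
    (hsub : ∀ X : Set V, c ≤ T.cliqueNumOn X → (T.restrict X).HasCopy (Dtour n))
    (hc : 0 < c) (hcl : 2 ^ (n + 1) * c ≤ clarge) {i : Fin t} {v : V} (hv : v ∈ B i) :
    T.cliqueNumOn (T.outN v ∩ ⋃ k, ⋃ (_ : k < i), B k) < 2 * c := by
  have hrev := hB.reverse.cliqueNumOn_inN_later_lt (fun h => hDfree h.reverse)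
    (fun X hX => (hsub X (by rwa [cliqueNumOn_reverse] at hX)).reverse) hc hcl
    (i := i.rev) (by rwa [Function.comp_apply, Fin.rev_rev])
  have hunion : ⋃ k, ⋃ (_ : i.rev < k), (B ∘ Fin.rev) k = ⋃ k, ⋃ (_ : k < i), B k := by
    ext w
    simp only [Set.mem_iUnion, Function.comp_apply]
    constructor
    · rintro ⟨k, hk, hw⟩
      exact ⟨k.rev, Fin.rev_lt_iff.mp hk, hw⟩
    · rintro ⟨k, hk, hw⟩
      exact ⟨k.rev, Fin.rev_lt_rev.mpr hk, by rwa [Fin.rev_rev]⟩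
  rwa [cliqueNumOn_reverse, hunion] at hrev

end Tournament

open Tournament in
/-- Lemma (bag-to-bag arcs): in a `(c_large, c_small)`-ω⃗-bag-chain of a `D n`-free
tournament, for each `v ∈ B i`, the in-neighbours of `v` in later bags and the
out-neighbours of `v` in earlier bags have clique number less than `2·c_small`. -/
theorem stmt_16 {V : Type} [Fintype V] (n : ℕ) (hn : 2 ≤ n)
    (csmall clarge : ℕ) (hcl : 2 ^ n * csmall ≤ clarge)
    (T : Tournament V)
    (hDfree : ¬ T.HasCopy (Dtour n))
    (hsub : ∀ X : Set V, csmall ≤ T.cliqueNumOn X → (T.restrict X).HasCopy (Dtour (n - 1)))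
    {t : ℕ} (B : Fin t → Set V) (hB : T.IsBagChain clarge csmall B)
    (i : Fin t) (v : V) (hv : v ∈ B i) :
    T.cliqueNumOn (T.inN v ∩ ⋃ k, ⋃ (_ : i < k), B k) < 2 * csmall ∧
    T.cliqueNumOn (T.outN v ∩ ⋃ k, ⋃ (_ : k < i), B k) < 2 * csmall := by
  obtain ⟨m, rfl⟩ : ∃ m, n = m + 2 := ⟨n - 2, by omega⟩
  have hc : 0 < csmall := by
    by_contra! h
    obtain ⟨f, hf, -⟩ := T.exists_copy_of_hasCopy_restrict (hsub ∅ (by omega))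
    exact Set.notMem_empty _ (hf (Sum.inr (Sum.inr ())))
  exact ⟨hB.cliqueNumOn_inN_later_lt hDfree hsub hc hcl hv,
    hB.cliqueNumOn_outN_earlier_lt hDfree hsub hc hcl hv⟩
end
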